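/- On ℓ_∞, define for each finite strictly increasing sequence j = (j_0, …, j_p) of natural numbers Q(x, j) = |x(j_0)| + Σ_{k=1}^{p} 2^{−k} x(j_k)^+, and ‖x‖ = sup_j Q(x, j), q(x) = (Σ_{k≥1} 2^{−k} x(k)²)^{1/2}, |||x||| = (‖x‖² + q(x)²)^{1/2}. Then for all x ∈ ℓ_∞: ‖x‖_∞ ≤ ‖x‖ ≤ |||x||| ≤ (‖x‖² + ‖x‖_∞²)^{1/2} ≤ √2 ‖x‖ ≤ 3 ‖x‖_∞. -/

import Mathlib

open Filter Topology BoundedContinuousFunction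

/-- `Q(x,j)` for a strictly increasing sequence `j` truncated at index `p`. -/
noncomputable def Qfun (x : ℕ →ᵇ ℝ) (j : ℕ → ℕ) (p : ℕ) : ℝ :=
  |x (j 0)| + ∑ k ∈ Finset.Icc 1 p, (1/2 : ℝ) ^ k * max (x (j k)) 0

/-- `‖x‖ = sup_j Q(x,j)`. -/
noncomputable def NrmQ (x : ℕ →ᵇ ℝ) : ℝ :=
  sSup {r : ℝ | ∃ (j : ℕ → ℕ) (p : ℕ), StrictMono j ∧ r = Qfun x j p}

/-- `q(x) = (Σ_{k≥1} 2^{-k} x(k)²)^{1/2}`. -/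
noncomputable def qQ (x : ℕ →ᵇ ℝ) : ℝ :=
  Real.sqrt (∑' k : ℕ, (1/2 : ℝ) ^ (k + 1) * (x k) ^ 2)

/-- `|||x||| = (‖x‖² + q(x)²)^{1/2}`. -/
noncomputable def TQ (x : ℕ →ᵇ ℝ) : ℝ :=
  Real.sqrt (NrmQ x ^ 2 + qQ x ^ 2)

/-! Every `Q(x, j)` is at most `2‖x‖_∞` because the weights `2^{-k}`, `k ≥ 1`, sum to at most `1`,
while the single-term sums `Q(x, (n, n+1, …), 0) = |x n|` already give `‖x‖_∞ ≤ ‖x‖`. Likewise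
`q(x)² ≤ ‖x‖_∞² ∑_{k ≥ 1} 2^{-k} = ‖x‖_∞²`. The chain then follows by monotonicity of `√`
and `√2 < 3/2`. -/

lemma sum_Icc_one_half_pow (p : ℕ) : ∑ k ∈ Finset.Icc 1 p, (1/2 : ℝ) ^ k = 1 - (1/2) ^ p := by
  induction p with
  | zero => simp
  | succ n ih =>
    rw [Finset.sum_Icc_succ_top (by omega), ih]
    ring

lemma abs_apply_le_norm (x : ℕ →ᵇ ℝ) (n : ℕ) : |x n| ≤ ‖x‖ :=
  Real.norm_eq_abs (x n) ▸ x.norm_coe_le_norm n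

lemma Qfun_le_two_mul_norm (x : ℕ →ᵇ ℝ) (j : ℕ → ℕ) (p : ℕ) : Qfun x j p ≤ 2 * ‖x‖ := by
  have hsum : ∑ k ∈ Finset.Icc 1 p, (1/2 : ℝ) ^ k * max (x (j k)) 0
      ≤ ∑ k ∈ Finset.Icc 1 p, (1/2 : ℝ) ^ k * ‖x‖ := by
    gcongr with k
    exact max_le ((le_abs_self _).trans (abs_apply_le_norm x (j k))) (norm_nonneg x)
  rw [← Finset.sum_mul, sum_Icc_one_half_pow] at hsum
  have hhead := abs_apply_le_norm x (j 0)
  have hp : (0 : ℝ) ≤ (1/2) ^ p := by positivity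
  unfold Qfun
  nlinarith [norm_nonneg x]

lemma Qfun_shift_zero (x : ℕ →ᵇ ℝ) (n : ℕ) : Qfun x (n + ·) 0 = |x n| := by
  simp [Qfun]

lemma abs_apply_le_NrmQ (x : ℕ →ᵇ ℝ) (n : ℕ) : |x n| ≤ NrmQ x :=
  le_csSup ⟨2 * ‖x‖, by rintro r ⟨j, p, -, rfl⟩; exact Qfun_le_two_mul_norm x j p⟩
    ⟨(n + ·), 0, add_right_strictMono, (Qfun_shift_zero x n).symm⟩

lemma NrmQ_nonneg (x : ℕ →ᵇ ℝ) : 0 ≤ NrmQ x :=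
  (abs_nonneg _).trans (abs_apply_le_NrmQ x 0)

lemma norm_le_NrmQ (x : ℕ →ᵇ ℝ) : ‖x‖ ≤ NrmQ x :=
  (norm_le (NrmQ_nonneg x)).2 fun n => (Real.norm_eq_abs _).trans_le (abs_apply_le_NrmQ x n)

lemma NrmQ_le_two_mul_norm (x : ℕ →ᵇ ℝ) : NrmQ x ≤ 2 * ‖x‖ :=
  csSup_le ⟨|x 0|, (0 + ·), 0, add_right_strictMono, (Qfun_shift_zero x 0).symm⟩
    (by rintro r ⟨j, p, -, rfl⟩; exact Qfun_le_two_mul_norm x j p)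

lemma hasSum_half_pow_succ_mul (c : ℝ) : HasSum (fun k : ℕ => (1/2 : ℝ) ^ (k + 1) * c) c := by
  convert hasSum_geometric_two' c using 2 with k
  rw [one_div, inv_pow, pow_succ]
  field_simp

lemma qQ_le_norm (x : ℕ →ᵇ ℝ) : qQ x ≤ ‖x‖ := by
  have hterm (k : ℕ) : (1/2 : ℝ) ^ (k + 1) * x k ^ 2 ≤ (1/2) ^ (k + 1) * ‖x‖ ^ 2 := by
    gcongr _ * ?_
    exact sq_le_sq.2 ((abs_apply_le_norm x k).trans (le_abs_self _))
  have hbound := hasSum_half_pow_succ_mul (‖x‖ ^ 2)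
  have hsum := hbound.summable.of_nonneg_of_le (fun k => by positivity) hterm
  rw [qQ, Real.sqrt_le_left (norm_nonneg x)]
  exact hasSum_le hterm hsum.hasSum hbound

theorem stmt16 (x : ℕ →ᵇ ℝ) :
    ‖x‖ ≤ NrmQ x ∧ NrmQ x ≤ TQ x ∧
    TQ x ≤ Real.sqrt (NrmQ x ^ 2 + ‖x‖ ^ 2) ∧
    Real.sqrt (NrmQ x ^ 2 + ‖x‖ ^ 2) ≤ Real.sqrt 2 * NrmQ x ∧
    Real.sqrt 2 * NrmQ x ≤ 3 * ‖x‖ := by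
  have hN := NrmQ_nonneg x
  have hxN := norm_le_NrmQ x
  refine ⟨hxN, ?_, ?_, ?_, ?_⟩
  · rw [TQ, Real.le_sqrt hN (by positivity)]
    exact le_add_of_nonneg_right (sq_nonneg _)
  · exact Real.sqrt_le_sqrt (by gcongr; exacts [Real.sqrt_nonneg _, qQ_le_norm x])
  · rw [Real.sqrt_le_left (by positivity), mul_pow, Real.sq_sqrt zero_le_two]
    nlinarith [norm_nonneg x]
  · calc Real.sqrt 2 * NrmQ x ≤ 3 / 2 * (2 * ‖x‖) :=
          mul_le_mul Real.sqrt_two_lt_three_halves.le (NrmQ_le_two_mul_norm x) hN (by norm_num)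
      _ = 3 * ‖x‖ := by ring
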